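/- arXiv:1702.00361 — 3 statements merged into one kernel-verified Lean document; each statement's English description precedes it below -/
import Mathlib

section
/- Every symmetric adversary is fair: if A is a symmetric adversary over a finite set Π, then for every P ⊆ Π and every Q ⊆ P, setcon(A|_{P,Q}) = min(|Q|, setcon(A|_P)). -/
variable {α : Type*} [DecidableEq α]

/-- The restriction `A|_P` of an adversary `A` to a set of processes `P`:
the live sets of `A` that are contained in `P`. -/
def restrict (A : Finset (Finset α)) (P : Finset α) : Finset (Finset α) :=
  A.filter fun S => S ⊆ P

/-- The set consensus power `setcon A` of an adversary `A`:
`setcon ∅ = 0` and, for `A ≠ ∅`,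
`setcon A = 1 + max_{S ∈ A} min_{a ∈ S} setcon (A|_{S \ {a}})`. -/
def setcon (A : Finset (Finset α)) : ℕ :=
  if A = ∅ then 0
  else 1 + A.attach.sup fun S =>
    WithTop.untopD 0 (S.1.attach.image fun a => setcon (restrict A (S.1.erase a.1))).min
termination_by A.card
decreasing_by
  apply Finset.card_lt_card
  rw [Finset.ssubset_def]
  refine ⟨Finset.filter_subset _ _, fun hsub => ?_⟩
  have hmem := hsub S.2
  rw [restrict, Finset.mem_filter] at hmem
  exact Finset.notMem_erase a.1 S.1 (hmem.2 a.2)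

/-- The restriction `A|_{P,Q}`: live sets of `A` contained in `P` that intersect `Q`. -/
def restrictTo (A : Finset (Finset α)) (P Q : Finset α) : Finset (Finset α) :=
  (restrict A P).filter fun S => (S ∩ Q).Nonempty

/-- An adversary is fair if for all `P` and all `Q ⊆ P`,
`setcon (A|_{P,Q}) = min |Q| (setcon (A|_P))`. -/
def Fair (A : Finset (Finset α)) : Prop :=
  ∀ P Q : Finset α, Q ⊆ P →
    setcon (restrictTo A P Q) = min Q.card (setcon (restrict A P))

/-- `csize A`: the minimal cardinality of a hitting set of `A`, i.e. of a set
intersecting every live set of `A`. -/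
noncomputable def csize (A : Finset (Finset α)) : ℕ :=
  sInf {k | ∃ H : Finset α, H.card = k ∧ ∀ S ∈ A, (H ∩ S).Nonempty}

/-! ### Auxiliary material -/

lemma attach_image_eq {β γ : Type*} [DecidableEq β] [DecidableEq γ] (s : Finset β) (g : β → γ) :
    (s.attach.image fun a => g a.1) = s.image g := by
  rw [show (fun a : {x // x ∈ s} => g a.1) = g ∘ Subtype.val from rfl,
    ← Finset.image_image, Finset.attach_image_val]

lemma min_untop'_image {β : Type*} (s : Finset β) (hs : s.Nonempty) (g : β → ℕ) :
    WithTop.untopD 0 ((s.image g).min) = s.inf' hs g := by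
  classical
  rw [← Finset.coe_min' (hs.image g), WithTop.untopD_coe, Finset.min'_eq_inf',
    Finset.inf'_image]
  rfl

/-- The quantity minimized inside the `setcon` recursion, as a total function. -/
def innerVal (B : Finset (Finset α)) (S : Finset α) : ℕ :=
  WithTop.untopD 0 (S.image fun a => setcon (restrict B (S.erase a))).min

lemma innerVal_eq {B : Finset (Finset α)} {S : Finset α} (hS : S.Nonempty) :
    innerVal B S = S.inf' hS fun a => setcon (restrict B (S.erase a)) :=
  min_untop'_image S hS _

lemma setcon_eq (B : Finset (Finset α)) (hB : B ≠ ∅) :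
    setcon B = 1 + B.sup (innerVal B) := by
  rw [setcon, if_neg hB]
  congr 1
  conv_rhs => rw [← Finset.sup_attach]
  apply Finset.sup_congr rfl
  intro S _
  rw [innerVal]
  rw [← attach_image_eq S.1 (fun a => setcon (restrict B (S.1.erase a)))]

lemma setcon_empty : setcon (∅ : Finset (Finset α)) = 0 := by
  rw [setcon]; simp

lemma mem_restrict {A : Finset (Finset α)} {P S : Finset α} :
    S ∈ restrict A P ↔ S ∈ A ∧ S ⊆ P := Finset.mem_filter

lemma mem_restrictTo {A : Finset (Finset α)} {P Q S : Finset α} :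
    S ∈ restrictTo A P Q ↔ S ∈ A ∧ S ⊆ P ∧ (S ∩ Q).Nonempty := by
  simp [restrictTo, restrict, Finset.mem_filter, and_assoc]

lemma restrict_restrict (A : Finset (Finset α)) {P R : Finset α} (h : R ⊆ P) :
    restrict (restrict A P) R = restrict A R := by
  ext S
  simp only [mem_restrict]
  exact ⟨fun ⟨⟨h1, _⟩, h3⟩ => ⟨h1, h3⟩, fun ⟨h1, h2⟩ => ⟨⟨h1, h2.trans h⟩, h2⟩⟩

lemma inter_inter_of_subset {S Q R : Finset α} (h : S ⊆ R) : S ∩ (Q ∩ R) = S ∩ Q := by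
  ext x
  simp only [Finset.mem_inter]
  exact ⟨fun ⟨a, b, _⟩ => ⟨a, b⟩, fun ⟨a, b⟩ => ⟨a, b, h a⟩⟩

lemma restrict_restrictTo (A : Finset (Finset α)) {P Q R : Finset α} (h : R ⊆ P) :
    restrict (restrictTo A P Q) R = restrictTo A R (Q ∩ R) := by
  ext S
  simp only [mem_restrict, mem_restrictTo]
  constructor
  · rintro ⟨⟨h1, _, h3⟩, h4⟩
    exact ⟨h1, h4, by rwa [inter_inter_of_subset h4]⟩
  · rintro ⟨h1, h2, h3⟩
    exact ⟨⟨h1, h2.trans h, by rwa [inter_inter_of_subset h2] at h3⟩, h2⟩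

/-- The set of cardinalities of live sets. -/
def sizes (A : Finset (Finset α)) : Finset ℕ := A.image Finset.card

/-- Number of live-set cardinalities at most `p`. -/
def fcount (A : Finset (Finset α)) (p : ℕ) : ℕ := ((sizes A).filter (· ≤ p)).card

lemma one_le_of_mem_sizes {A : Finset (Finset α)} (hne : ∀ S ∈ A, S.Nonempty)
    {n : ℕ} (hn : n ∈ sizes A) : 1 ≤ n := by
  obtain ⟨S, hS, rfl⟩ := Finset.mem_image.mp hn
  exact Finset.card_pos.mpr (hne S hS)

lemma fcount_mono (A : Finset (Finset α)) {p q : ℕ} (h : p ≤ q) :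
    fcount A p ≤ fcount A q := by
  apply Finset.card_le_card
  intro n hn
  rw [Finset.mem_filter] at hn ⊢
  exact ⟨hn.1, le_trans hn.2 h⟩

lemma fcount_le_self {A : Finset (Finset α)} (hne : ∀ S ∈ A, S.Nonempty) (p : ℕ) :
    fcount A p ≤ p := by
  have : (sizes A).filter (· ≤ p) ⊆ Finset.Icc 1 p := by
    intro n hn
    rw [Finset.mem_filter] at hn
    rw [Finset.mem_Icc]
    exact ⟨one_le_of_mem_sizes hne hn.1, hn.2⟩
  calc fcount A p ≤ (Finset.Icc 1 p).card := Finset.card_le_card this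
    _ = p := by rw [Nat.card_Icc]; omega

lemma fcount_of_max {A : Finset (Finset α)} (hne : ∀ S ∈ A, S.Nonempty)
    {m p : ℕ} (hm : m ∈ sizes A) (hmp : m ≤ p)
    (hmax : ∀ ℓ ∈ sizes A, ℓ ≤ p → ℓ ≤ m) :
    fcount A p = fcount A (m - 1) + 1 := by
  have h1 : 1 ≤ m := one_le_of_mem_sizes hne hm
  have key : (sizes A).filter (· ≤ p) = insert m ((sizes A).filter (· ≤ m - 1)) := by
    ext n
    simp only [Finset.mem_filter, Finset.mem_insert]
    constructor
    · rintro ⟨hn, hnp⟩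
      rcases eq_or_ne n m with rfl | h
      · exact Or.inl rfl
      · have := hmax n hn hnp
        exact Or.inr ⟨hn, by omega⟩
    · rintro (rfl | ⟨hn, hn'⟩)
      · exact ⟨hm, hmp⟩
      · exact ⟨hn, by omega⟩
  rw [fcount, key, Finset.card_insert_of_notMem]
  · rfl
  · simp only [Finset.mem_filter, not_and]
    intro _
    omega

lemma fcount_succ_of_mem {A : Finset (Finset α)} (hne : ∀ S ∈ A, S.Nonempty)
    {ℓ : ℕ} (hℓ : ℓ ∈ sizes A) : fcount A ℓ = fcount A (ℓ - 1) + 1 :=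
  fcount_of_max hne hℓ le_rfl (fun _ _ h => h)

lemma exists_live_set {A : Finset (Finset α)}
    (hsym : ∀ S ∈ A, ∀ S' : Finset α, S'.card = S.card → S' ∈ A)
    {ℓ : ℕ} (hℓ : ℓ ∈ sizes A) {T P : Finset α} (hTP : T ⊆ P)
    (hT : T.card ≤ ℓ) (hP : ℓ ≤ P.card) :
    ∃ S : Finset α, S ∈ A ∧ T ⊆ S ∧ S ⊆ P ∧ S.card = ℓ := by
  obtain ⟨S₀, hS₀, hcard⟩ := Finset.mem_image.mp hℓ
  obtain ⟨S, h1, h2, h3⟩ := Finset.exists_subsuperset_card_eq hTP hT hP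
  exact ⟨S, hsym S₀ hS₀ S (by rw [h3, hcard]), h1, h2, h3⟩

lemma exists_max_size (A : Finset (Finset α)) {p : ℕ}
    (hF : ((sizes A).filter (· ≤ p)).Nonempty) :
    ∃ m, m ∈ sizes A ∧ m ≤ p ∧ ∀ ℓ ∈ sizes A, ℓ ≤ p → ℓ ≤ m := by
  have hmem := Finset.max'_mem _ hF
  rw [Finset.mem_filter] at hmem
  refine ⟨((sizes A).filter (· ≤ p)).max' hF, hmem.1, hmem.2, fun ℓ h1 h2 => ?_⟩
  have hℓ : ℓ ∈ (sizes A).filter (· ≤ p) := Finset.mem_filter.mpr ⟨h1, h2⟩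
  exact Finset.le_max' _ ℓ hℓ

lemma setcon_restrict_eq {A : Finset (Finset α)}
    (hne : ∀ S ∈ A, S.Nonempty)
    (hsym : ∀ S ∈ A, ∀ S' : Finset α, S'.card = S.card → S' ∈ A) :
    ∀ n : ℕ, ∀ P : Finset α, P.card ≤ n →
      setcon (restrict A P) = fcount A P.card := by
  intro n
  induction n with
  | zero =>
    intro P hP
    have hP0 : P.card = 0 := Nat.le_zero.mp hP
    have hE : restrict A P = ∅ := by
      rw [Finset.eq_empty_iff_forall_notMem]
      intro S hS
      rw [mem_restrict] at hS
      have := Finset.card_pos.mpr (hne S hS.1)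
      have := Finset.card_le_card hS.2
      omega
    rw [hE, setcon_empty]
    have : (sizes A).filter (· ≤ P.card) = ∅ := by
      rw [Finset.eq_empty_iff_forall_notMem]
      intro ℓ hℓ
      rw [Finset.mem_filter] at hℓ
      have := one_le_of_mem_sizes hne hℓ.1
      omega
    rw [fcount, this, Finset.card_empty]
  | succ n ih =>
    intro P hP
    by_cases hE : restrict A P = ∅
    · rw [hE, setcon_empty]
      by_contra hc
      have hpos : 0 < fcount A P.card := Nat.pos_of_ne_zero (fun h => hc h.symm)
      rw [fcount, Finset.card_pos] at hpos
      obtain ⟨ℓ, hℓ⟩ := hpos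
      rw [Finset.mem_filter] at hℓ
      obtain ⟨S, hSA, _, hSP, _⟩ :=
        exists_live_set hsym hℓ.1 (Finset.empty_subset P) (by simp) hℓ.2
      exact Finset.notMem_empty S (hE ▸ mem_restrict.mpr ⟨hSA, hSP⟩)
    · rw [setcon_eq _ hE]
      have hval : ∀ S ∈ restrict A P,
          innerVal (restrict A P) S = fcount A (S.card - 1) := by
        intro S hS
        obtain ⟨hSA, hSP⟩ := mem_restrict.mp hS
        rw [innerVal_eq (hne S hSA)]
        apply Finset.inf'_eq_of_forall
        intro a ha
        rw [restrict_restrict A ((Finset.erase_subset a S).trans hSP),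
          ih (S.erase a) (by
            have h1 : S.card ≤ P.card := Finset.card_le_card hSP
            rw [Finset.card_erase_of_mem ha]; omega),
          Finset.card_erase_of_mem ha]
      have hFne : ((sizes A).filter (· ≤ P.card)).Nonempty := by
        obtain ⟨S, hS⟩ := Finset.nonempty_iff_ne_empty.mpr hE
        obtain ⟨hSA, hSP⟩ := mem_restrict.mp hS
        exact ⟨S.card, Finset.mem_filter.mpr
          ⟨Finset.mem_image_of_mem _ hSA, Finset.card_le_card hSP⟩⟩
      obtain ⟨m, hm1, hm2, hmax⟩ := exists_max_size A hFne
      have hsup : (restrict A P).sup (innerVal (restrict A P)) = fcount A (m - 1) := by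
        apply le_antisymm
        · apply Finset.sup_le
          intro S hS
          rw [hval S hS]
          obtain ⟨hSA, hSP⟩ := mem_restrict.mp hS
          have : S.card ≤ m :=
            hmax _ (Finset.mem_image_of_mem _ hSA) (Finset.card_le_card hSP)
          exact fcount_mono A (by omega)
        · obtain ⟨S, hSA, _, hSP, hScard⟩ :=
            exists_live_set hsym hm1 (Finset.empty_subset P) (by simp) hm2
          have hS : S ∈ restrict A P := mem_restrict.mpr ⟨hSA, hSP⟩
          have h := Finset.le_sup (f := innerVal (restrict A P)) hS
          rw [hval S hS, hScard] at h
          exact h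
      rw [hsup, fcount_of_max hne hm1 hm2 hmax]
      omega

lemma setcon_restrictTo_eq {A : Finset (Finset α)}
    (hne : ∀ S ∈ A, S.Nonempty)
    (hsym : ∀ S ∈ A, ∀ S' : Finset α, S'.card = S.card → S' ∈ A) :
    ∀ n : ℕ, ∀ P Q : Finset α, Q ⊆ P → P.card ≤ n →
      setcon (restrictTo A P Q) = min Q.card (fcount A P.card) := by
  intro n
  induction n with
  | zero =>
    intro P Q hQP hP
    have hE : restrictTo A P Q = ∅ := by
      rw [Finset.eq_empty_iff_forall_notMem]
      intro S hS
      rw [mem_restrictTo] at hS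
      have := Finset.card_pos.mpr (hne S hS.1)
      have := Finset.card_le_card hS.2.1
      omega
    have hQ : Q.card = 0 := by
      have := Finset.card_le_card hQP
      omega
    rw [hE, setcon_empty, hQ]
    simp
  | succ n ih =>
    intro P Q hQP hP
    by_cases hE : restrictTo A P Q = ∅
    · rw [hE, setcon_empty]
      by_contra hc
      have hQpos : 0 < Q.card := by
        rcases Nat.eq_zero_or_pos Q.card with h | h
        · exact absurd (by rw [h]; simp) hc
        · exact h
      have hfpos : 0 < fcount A P.card := by
        rcases Nat.eq_zero_or_pos (fcount A P.card) with h | h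
        · exact absurd (by rw [h]; simp) hc
        · exact h
      rw [fcount, Finset.card_pos] at hfpos
      obtain ⟨ℓ, hℓ⟩ := hfpos
      rw [Finset.mem_filter] at hℓ
      obtain ⟨q, hq⟩ := Finset.card_pos.mp hQpos
      have h1ℓ : 1 ≤ ℓ := one_le_of_mem_sizes hne hℓ.1
      obtain ⟨S, hSA, hqS, hSP, _⟩ := exists_live_set hsym hℓ.1
        (Finset.singleton_subset_iff.mpr (hQP hq))
        (by simpa using h1ℓ) hℓ.2
      have : S ∈ restrictTo A P Q := mem_restrictTo.mpr
        ⟨hSA, hSP, ⟨q, Finset.mem_inter.mpr ⟨hqS (Finset.mem_singleton_self q), hq⟩⟩⟩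
      exact Finset.notMem_empty S (hE ▸ this)
    · rw [setcon_eq _ hE]
      -- facts
      have hQne : Q.Nonempty := by
        obtain ⟨S, hS⟩ := Finset.nonempty_iff_ne_empty.mpr hE
        obtain ⟨_, _, x, hx⟩ := mem_restrictTo.mp hS
        exact ⟨x, (Finset.mem_inter.mp hx).2⟩
      have hFne : ((sizes A).filter (· ≤ P.card)).Nonempty := by
        obtain ⟨S, hS⟩ := Finset.nonempty_iff_ne_empty.mpr hE
        obtain ⟨hSA, hSP, _⟩ := mem_restrictTo.mp hS
        exact ⟨S.card, Finset.mem_filter.mpr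
          ⟨Finset.mem_image_of_mem _ hSA, Finset.card_le_card hSP⟩⟩
      obtain ⟨m, hm1, hm2, hmax⟩ := exists_max_size A hFne
      have h1m : 1 ≤ m := one_le_of_mem_sizes hne hm1
      have hfP : fcount A P.card = fcount A (m - 1) + 1 :=
        fcount_of_max hne hm1 hm2 hmax
      have hfm1 : fcount A (m - 1) ≤ m - 1 := fcount_le_self hne (m - 1)
      have hQ1 : 1 ≤ Q.card := Finset.card_pos.mpr hQne
      -- inductive-hypothesis value of the inner quantity
      have hval : ∀ (S : Finset α) (hS : S ∈ restrictTo A P Q),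
          innerVal (restrictTo A P Q) S
            = S.inf' (hne S (mem_restrictTo.mp hS).1) fun a =>
                min (Q ∩ S.erase a).card (fcount A (S.card - 1)) := by
        intro S hS
        obtain ⟨hSA, hSP, _⟩ := mem_restrictTo.mp hS
        rw [innerVal_eq (hne S hSA)]
        refine Finset.inf'_congr (hne S hSA) rfl fun a ha => ?_
        rw [restrict_restrictTo A ((Finset.erase_subset a S).trans hSP),
          ih (S.erase a) (Q ∩ S.erase a) Finset.inter_subset_right (by
            have h1 : S.card ≤ P.card := Finset.card_le_card hSP
            rw [Finset.card_erase_of_mem ha]; omega),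
          Finset.card_erase_of_mem ha]
      apply le_antisymm
      · -- upper bound
        have hsup : (restrictTo A P Q).sup (innerVal (restrictTo A P Q))
            ≤ min Q.card (fcount A P.card) - 1 := by
          apply Finset.sup_le
          intro S hS
          rw [hval S hS]
          obtain ⟨hSA, hSP, hSQ⟩ := mem_restrictTo.mp hS
          obtain ⟨a, ha⟩ := hSQ
          have haS := (Finset.mem_inter.mp ha).1
          have haQ := (Finset.mem_inter.mp ha).2
          refine le_trans (Finset.inf'_le _ haS) ?_
          have h1 : (Q ∩ S.erase a).card ≤ Q.card - 1 := by
            have hsub : Q ∩ S.erase a ⊆ Q.erase a := by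
              intro x hx
              rw [Finset.mem_inter] at hx
              exact Finset.mem_erase.mpr ⟨(Finset.mem_erase.mp hx.2).1, hx.1⟩
            calc (Q ∩ S.erase a).card ≤ (Q.erase a).card := Finset.card_le_card hsub
              _ = Q.card - 1 := Finset.card_erase_of_mem haQ
          have h2 : fcount A (S.card - 1) + 1 ≤ fcount A P.card := by
            rw [← fcount_succ_of_mem hne (Finset.mem_image_of_mem _ hSA)]
            exact fcount_mono A (Finset.card_le_card hSP)
          omega
        omega
      · -- lower bound
        obtain ⟨T, hTQ, hTcard⟩ := Finset.exists_subset_card_eq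
          (show min Q.card m ≤ Q.card from min_le_left _ _)
        obtain ⟨S, hSA, hTS, hSP, hScard⟩ := exists_live_set hsym hm1
          (hTQ.trans hQP) (by omega) hm2
        have hS : S ∈ restrictTo A P Q := by
          refine mem_restrictTo.mpr ⟨hSA, hSP, ?_⟩
          obtain ⟨t, ht⟩ := Finset.card_pos.mp (by omega : 0 < T.card)
          exact ⟨t, Finset.mem_inter.mpr ⟨hTS ht, hTQ ht⟩⟩
        have hinf : min (min Q.card m - 1) (fcount A (m - 1)) ≤
            innerVal (restrictTo A P Q) S := by
          rw [hval S hS]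
          apply Finset.le_inf'
          intro a ha
          rw [hScard]
          have hTsub : T.erase a ⊆ Q ∩ S.erase a := by
            intro x hx
            rw [Finset.mem_erase] at hx
            exact Finset.mem_inter.mpr
              ⟨hTQ hx.2, Finset.mem_erase.mpr ⟨hx.1, hTS hx.2⟩⟩
          have hTec : min Q.card m - 1 ≤ (T.erase a).card := by
            have := Finset.pred_card_le_card_erase (s := T) (a := a)
            omega
          have := Finset.card_le_card hTsub
          omega
        have hlesup : innerVal (restrictTo A P Q) S
            ≤ (restrictTo A P Q).sup (innerVal (restrictTo A P Q)) :=
          Finset.le_sup hS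
        refine le_trans ?_ (Nat.add_le_add_left (le_trans hinf hlesup) 1)
        omega

/-- Every symmetric adversary is fair. -/
theorem symmetric_isFair [Fintype α] (A : Finset (Finset α))
    (hne : ∀ S ∈ A, S.Nonempty)
    (hsym : ∀ S ∈ A, ∀ S' : Finset α, S'.card = S.card → S' ∈ A) :
    ∀ P Q : Finset α, Q ⊆ P →
      setcon (restrictTo A P Q) = min Q.card (setcon (restrict A P)) := by
  intro P Q hQP
  rw [setcon_restrict_eq hne hsym P.card P le_rfl,
    setcon_restrictTo_eq hne hsym P.card P Q hQP le_rfl]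
end

section
/- Not every fair adversary is symmetric or superset-closed: over Π = {p1, p2, p3}, the adversary A consisting of all nonempty subsets of Π except {p1,p2} is fair, but A is neither symmetric nor superset-closed. -/
variable {α : Type*} [DecidableEq α]

unseal setcon in
/-- over three processes, the adversary consisting of all nonempty
subsets except `{p1, p2}` is fair but neither symmetric nor superset-closed. -/
theorem fair_not_symmetric_not_supersetClosed :
    let A : Finset (Finset (Fin 3)) :=
      Finset.univ.filter fun S => S.Nonempty ∧ S ≠ ({0, 1} : Finset (Fin 3))
    Fair A ∧
    ¬ (∀ S ∈ A, ∀ S' : Finset (Fin 3), S'.card = S.card → S' ∈ A) ∧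
    ¬ (∀ S ∈ A, ∀ S' : Finset (Fin 3), S ⊆ S' → S' ∈ A) := by
  refine ⟨?_, ?_, ?_⟩
  · unfold Fair
    decide
  · intro h
    have := h {0,2} (by decide) {0,1} (by decide)
    revert this; decide
  · intro h
    have := h {0} (by decide) {0,1} (by decide)
    revert this; decide
end

section
/- The agreement function of the k-obstruction-free adversary: let Π be a finite set of processes and k ≥ 1. For the adversary A_k = {S ⊆ Π : 1 ≤ |S| ≤ k}, one has setcon(A_k|_P) = min(|P|, k) for every P ⊆ Π. -/
variable {α : Type*} [DecidableEq α]

/-- the agreement function of the `k`-obstruction-free adversary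
(all nonempty subsets of size at most `k`, `k ≥ 1`) is `P ↦ min |P| k`. -/
theorem setcon_kObstructionFree [Fintype α] (k : ℕ) (hk : 1 ≤ k) (P : Finset α) :
    setcon (restrict
        (Finset.univ.filter fun S : Finset α => S.Nonempty ∧ S.card ≤ k) P) =
      min P.card k := by
  induction P using Finset.strongInduction with
  | _ P ih =>
  set A : Finset (Finset α) :=
    Finset.univ.filter fun S : Finset α => S.Nonempty ∧ S.card ≤ k with hA
  have hmemA : ∀ T : Finset α, T ∈ A ↔ T.Nonempty ∧ T.card ≤ k := by
    intro T; simp [hA]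
  have hmemR : ∀ (Q : Finset α) (T : Finset α),
      T ∈ restrict A Q ↔ T.Nonempty ∧ T.card ≤ k ∧ T ⊆ Q := by
    intro Q T
    simp only [restrict, Finset.mem_filter, hmemA]
    tauto
  rcases P.eq_empty_or_nonempty with rfl | hP
  · have : restrict A ∅ = ∅ := by
      ext T
      simp only [hmemR, Finset.notMem_empty, iff_false]
      rintro ⟨hne, -, hsub⟩
      exact hne.ne_empty (Finset.subset_empty.mp hsub)
    rw [this, setcon]
    simp
  · set m := min P.card k with hm
    have hm1 : 1 ≤ m := le_min (Finset.card_pos.mpr hP) hk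
    obtain ⟨p, hp⟩ := hP
    have hne : restrict A P ≠ ∅ := by
      intro h
      have : ({p} : Finset α) ∈ restrict A P := by
        rw [hmemR]
        exact ⟨Finset.singleton_nonempty p, by simpa using hk, by simpa using hp⟩
      simp [h] at this
    rw [setcon, if_neg hne]
    -- pointwise value under the sup
    have hval : ∀ S : {x // x ∈ restrict A P},
        (WithTop.untopD 0 (S.1.attach.image fun a =>
            setcon (restrict (restrict A P) (S.1.erase a.1))).min)
          = S.1.card - 1 := by
      intro S
      obtain ⟨hSne, hSk, hSP⟩ := (hmemR P S.1).mp S.2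
      have hconst : ∀ a ∈ S.1.attach,
          setcon (restrict (restrict A P) (S.1.erase a.1)) = S.1.card - 1 := by
        intro a _
        have hrr : restrict (restrict A P) (S.1.erase a.1)
            = restrict A (S.1.erase a.1) := by
          ext T
          simp only [restrict, Finset.mem_filter]
          constructor
          · rintro ⟨⟨h1, -⟩, h2⟩; exact ⟨h1, h2⟩
          · rintro ⟨h1, h2⟩
            exact ⟨⟨h1, h2.trans ((S.1.erase_subset a.1).trans hSP)⟩, h2⟩
        have hsub : S.1.erase a.1 ⊆ P := (S.1.erase_subset a.1).trans hSP
        have hcard : (S.1.erase a.1).card < P.card := by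
          rw [Finset.card_erase_of_mem a.2]
          have h1 := Finset.card_le_card hSP
          have h2 := Finset.card_pos.mpr hSne
          omega
        have hss : S.1.erase a.1 ⊂ P :=
          lt_of_le_of_ne hsub (fun h => absurd (h ▸ hcard) (lt_irrefl _))
        rw [hrr, ih _ hss, Finset.card_erase_of_mem a.2]
        exact Nat.min_eq_left (le_trans (Nat.sub_le _ _) hSk)
      have himg : (S.1.attach.image fun a =>
          setcon (restrict (restrict A P) (S.1.erase a.1)))
          = {S.1.card - 1} := by
        rw [Finset.image_congr (fun a ha => hconst a ha)]
        exact Finset.image_const (Finset.attach_nonempty_iff.mpr hSne) _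
      rw [himg]
      rfl
    rw [Finset.sup_congr rfl (fun S _ => hval S)]
    have hsup : ((restrict A P).attach.sup fun S => S.1.card - 1) = m - 1 := by
      apply le_antisymm
      · apply Finset.sup_le
        intro S _
        obtain ⟨hSne, hSk, hSP⟩ := (hmemR P S.1).mp S.2
        have := Finset.card_le_card hSP
        have : S.1.card ≤ m := le_min this hSk
        omega
      · obtain ⟨T, hTP, hTc⟩ := Finset.exists_subset_card_eq (s := P) (n := m) (min_le_left _ _)
        have hTmem : T ∈ restrict A P := by
          rw [hmemR]
          exact ⟨Finset.card_pos.mp (by omega), by omega, hTP⟩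
        have := Finset.le_sup (f := fun S : {x // x ∈ restrict A P} => S.1.card - 1)
          (Finset.mem_attach _ ⟨T, hTmem⟩)
        simpa [hTc] using this
    omega
end
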